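/- arXiv:cond-mat/0606040 — 7 statements merged into one kernel-verified Lean document; each statement's English description precedes it below -/
import Mathlib

section
/- Let α ∈ (0,2] and let s be a nonzero real number. Provided all denominators involved are nonzero (namely α - (s-1) ≠ 0, z_α(s) ≠ 0, α - (1/z_α(s) - 1) ≠ 0, α - (1/s - 1) ≠ 0, α + (s-1) ≠ 0 and z_α⁻¹(s) ≠ 0), the function z_α satisfies the two identities: z_α(1/z_α(s)) = 1/s and z_α(1/s) = 1/z_α⁻¹(s). -/
/-- The rational map `z_α(s) = (αs - (s-1))/(α - (s-1))`. -/
noncomputable def zMap (α s : ℝ) : ℝ := (α * s - (s - 1)) / (α - (s - 1))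

/-- The rational map `z_α⁻¹(t) = (αt + (t-1))/(α + (t-1))`. -/
noncomputable def zMapInv (α t : ℝ) : ℝ := (α * t + (t - 1)) / (α + (t - 1))

/-!
`z_α` is the Möbius transformation of `M = [[α-1, 1], [-1, α+1]]`, `z_α⁻¹` that of
`N = [[α+1, -1], [1, α-1]]`, and `t ↦ 1/t` that of `J = [[0, 1], [1, 0]]`.
Both identities are matrix identities up to scalars: `M J = J N`, and `(M J)² = α² I`
since `M J = [[1, α-1], [α+1, -1]]` has trace `0` and determinant `-α²`.
-/

theorem zMap_div (α a : ℝ) {b : ℝ} (hb : b ≠ 0) :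
    zMap α (a / b) = ((α - 1) * a + b) / ((α + 1) * b - a) := by
  have hnum : α * (a / b) - (a / b - 1) = ((α - 1) * a + b) / b := by field_simp; ring
  have hden : α - (a / b - 1) = ((α + 1) * b - a) / b := by field_simp; ring
  rw [zMap, hnum, hden, div_div_div_cancel_right₀ hb]

theorem zMap_one_div_zMap {α s : ℝ} (hα : α ≠ 0) (hz : zMap α s ≠ 0) :
    zMap α (1 / zMap α s) = 1 / s := by
  have hN : α * s - (s - 1) ≠ 0 := (div_ne_zero_iff.mp hz).1
  calc zMap α (1 / zMap α s)
      = ((α - 1) * (α - (s - 1)) + (α * s - (s - 1))) /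
          ((α + 1) * (α * s - (s - 1)) - (α - (s - 1))) := by
        rw [show 1 / zMap α s = (α - (s - 1)) / (α * s - (s - 1)) from one_div_div _ _,
          zMap_div α _ hN]
    _ = α ^ 2 / (α ^ 2 * s) := by congr 1 <;> ring
    _ = 1 / s := by rw [div_mul_cancel_left₀ (pow_ne_zero 2 hα), one_div]

theorem zMap_one_div (α : ℝ) {s : ℝ} (hs : s ≠ 0) : zMap α (1 / s) = 1 / zMapInv α s := by
  rw [zMap_div α 1 hs, zMapInv, one_div_div]
  congr 1 <;> ring

theorem zMap_inverse_identities_general (α : ℝ) (hα0 : 0 < α)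
    (s : ℝ) (hs0 : s ≠ 0)
    (h2 : zMap α s ≠ 0) :
    zMap α (1 / zMap α s) = 1 / s ∧ zMap α (1 / s) = 1 / zMapInv α s :=
  ⟨zMap_one_div_zMap hα0.ne' h2, zMap_one_div α hs0⟩

/-- For `α ∈ (0,2]` and nonzero `s` (with all denominators nonzero),
`z_α(1/z_α(s)) = 1/s` and `z_α(1/s) = 1/z_α⁻¹(s)`. -/
theorem zMap_inverse_identities (α : ℝ) (hα0 : 0 < α) (hα2 : α ≤ 2)
    (s : ℝ) (hs0 : s ≠ 0)
    (h1 : α - (s - 1) ≠ 0) (h2 : zMap α s ≠ 0)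
    (h3 : α - (1 / zMap α s - 1) ≠ 0) (h4 : α - (1 / s - 1) ≠ 0)
    (h5 : α + (s - 1) ≠ 0) (h6 : zMapInv α s ≠ 0) :
    zMap α (1 / zMap α s) = 1 / s ∧ zMap α (1 / s) = 1 / zMapInv α s :=
  zMap_inverse_identities_general α hα0 s hs0 h2
end

section
/- Let α ∈ (0,2] and let q be real. Define the sequence by q_{α,0} = q and q_{α,n+1} = z_α(q_{α,n}). If α - k(q-1) ≠ 0 for every integer k with 0 ≤ k ≤ n, then the n-th forward iterate has the closed form q_{α,n} = (αq - n(q-1))/(α - n(q-1)) = 1 + α(q-1)/(α - n(q-1)). -/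
/-! Writing `u = q - 1`, the map `z_α` acts on `s - 1` as `v ↦ αv/(α - v)`, and each application
adds `1` to the coefficient `m` in `αu/(α - mu)`. -/

lemma zMap_eq_one_add {α s : ℝ} (hs : α - (s - 1) ≠ 0) :
    zMap α s = 1 + α * (s - 1) / (α - (s - 1)) := by
  rw [zMap, eq_comm, one_add_div hs]
  ring

lemma zMap_one_add_div {α u m : ℝ} (hα : α ≠ 0) (hm : α - m * u ≠ 0)
    (hm₁ : α - (m + 1) * u ≠ 0) :
    zMap α (1 + α * u / (α - m * u)) = 1 + α * u / (α - (m + 1) * u) := by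
  have hD : α - (1 + α * u / (α - m * u) - 1) = α * (α - (m + 1) * u) / (α - m * u) := by
    rw [eq_div_iff hm, add_sub_cancel_left, sub_mul, div_mul_cancel₀ _ hm]
    ring
  rw [zMap_eq_one_add (by rw [hD]; exact div_ne_zero (mul_ne_zero hα hm₁) hm), hD,
    add_sub_cancel_left, mul_div_assoc', div_div_div_cancel_right₀ hm, mul_div_mul_left _ _ hα]

lemma zMap_iterate_eq_one_add_div {α q : ℝ} {n : ℕ}
    (h : ∀ k : ℕ, k ≤ n → α - (k : ℝ) * (q - 1) ≠ 0) :
    (zMap α)^[n] q = 1 + α * (q - 1) / (α - (n : ℝ) * (q - 1)) := by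
  have hα : α ≠ 0 := by simpa using h 0 (Nat.zero_le n)
  induction n with
  | zero =>
    rw [Function.iterate_zero_apply, Nat.cast_zero, zero_mul, sub_zero, mul_div_cancel_left₀ _ hα]
    ring
  | succ n ih =>
    rw [Function.iterate_succ_apply', ih fun k hk => h k (Nat.le_succ_of_le hk), Nat.cast_succ]
    exact zMap_one_add_div hα (h n n.le_succ) (by exact_mod_cast h (n + 1) le_rfl)

theorem zMap_iterate_closed_form_general (α : ℝ)
    (q : ℝ) (n : ℕ) (h : ∀ k : ℕ, k ≤ n → α - (k : ℝ) * (q - 1) ≠ 0) :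
    (zMap α)^[n] q = (α * q - (n : ℝ) * (q - 1)) / (α - (n : ℝ) * (q - 1)) ∧
      (zMap α)^[n] q = 1 + α * (q - 1) / (α - (n : ℝ) * (q - 1)) := by
  have hq := zMap_iterate_eq_one_add_div h
  refine ⟨hq.trans ?_, hq⟩
  rw [one_add_div (h n le_rfl)]
  ring

/-- Closed form of the forward iterates `q_{α,n}` of `z_α` starting at `q`:
if `α - k(q-1) ≠ 0` for `0 ≤ k ≤ n`, then
`q_{α,n} = (αq - n(q-1))/(α - n(q-1)) = 1 + α(q-1)/(α - n(q-1))`. -/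
theorem zMap_iterate_closed_form (α : ℝ) (hα0 : 0 < α) (hα2 : α ≤ 2)
    (q : ℝ) (n : ℕ) (h : ∀ k : ℕ, k ≤ n → α - (k : ℝ) * (q - 1) ≠ 0) :
    (zMap α)^[n] q = (α * q - (n : ℝ) * (q - 1)) / (α - (n : ℝ) * (q - 1)) ∧
      (zMap α)^[n] q = 1 + α * (q - 1) / (α - (n : ℝ) * (q - 1)) :=
  zMap_iterate_closed_form_general α q n h
end

section
/- Let α ∈ (0,2] and let q be real. Define the sequence by q_{α,0} = q and q_{α,-(n+1)} = z_α⁻¹(q_{α,-n}). If α + k(q-1) ≠ 0 for every integer k with 0 ≤ k ≤ n, then the n-th backward iterate has the closed form q_{α,-n} = (αq + n(q-1))/(α + n(q-1)), i.e., the closed form (αq - m(q-1))/(α - m(q-1)) holds with m = -n. -/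
/- If `α + (x + 1) * (q - 1) = 0`, both sides are the junk value `_ / 0 = 0`. -/
theorem zMapInv_closedForm_add_one {α q x : ℝ} (hα : α ≠ 0)
    (hx : α + x * (q - 1) ≠ 0) :
    zMapInv α ((α * q + x * (q - 1)) / (α + x * (q - 1)))
      = (α * q + (x + 1) * (q - 1)) / (α + (x + 1) * (q - 1)) := by
  have hden : α + ((α * q + x * (q - 1)) / (α + x * (q - 1)) - 1)
      = α * (α + (x + 1) * (q - 1)) / (α + x * (q - 1)) := by
    field_simp
    ring
  rw [zMapInv, hden]
  field_simp
  ring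

theorem zMapInv_iterate_eq (α q : ℝ) (n : ℕ)
    (h : ∀ k : ℕ, k ≤ n → α + (k : ℝ) * (q - 1) ≠ 0) :
    (zMapInv α)^[n] q = (α * q + (n : ℝ) * (q - 1)) / (α + (n : ℝ) * (q - 1)) := by
  have hα : α ≠ 0 := by simpa using h 0 n.zero_le
  induction n with
  | zero => simp [hα]
  | succ n ih =>
    rw [Function.iterate_succ_apply', ih fun k hk => h k (hk.trans n.le_succ), Nat.cast_succ,
      zMapInv_closedForm_add_one hα (h n n.le_succ)]

theorem zMapInv_iterate_closed_form_general (α : ℝ)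
    (q : ℝ) (n : ℕ) (h : ∀ k : ℕ, k ≤ n → α + (k : ℝ) * (q - 1) ≠ 0) :
    (zMapInv α)^[n] q = (α * q + (n : ℝ) * (q - 1)) / (α + (n : ℝ) * (q - 1)) ∧
      (zMapInv α)^[n] q
        = (α * q - (-(n : ℝ)) * (q - 1)) / (α - (-(n : ℝ)) * (q - 1)) := by
  have hclosed := zMapInv_iterate_eq α q n h
  refine ⟨hclosed, ?_⟩
  rw [hclosed, neg_mul, sub_neg_eq_add, sub_neg_eq_add]

/-- Closed form of the backward iterates `q_{α,-n}` of `z_α` (i.e. forward iterates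
of `z_α⁻¹`) starting at `q`: if `α + k(q-1) ≠ 0` for `0 ≤ k ≤ n`, then
`q_{α,-n} = (αq + n(q-1))/(α + n(q-1))`, which is the closed form
`(αq - m(q-1))/(α - m(q-1))` with `m = -n`. -/
theorem zMapInv_iterate_closed_form (α : ℝ) (hα0 : 0 < α) (hα2 : α ≤ 2)
    (q : ℝ) (n : ℕ) (h : ∀ k : ℕ, k ≤ n → α + (k : ℝ) * (q - 1) ≠ 0) :
    (zMapInv α)^[n] q = (α * q + (n : ℝ) * (q - 1)) / (α + (n : ℝ) * (q - 1)) ∧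
      (zMapInv α)^[n] q
        = (α * q - (-(n : ℝ)) * (q - 1)) / (α - (-(n : ℝ)) * (q - 1)) :=
  zMapInv_iterate_closed_form_general α q n h
end

section
/- Let α ∈ (0,2], let q be real, and let n be an integer such that α - (n-1)(q-1) ≠ 0, α - (n+1)(q-1) ≠ 0 and q*_{α,n+1} ≠ 0. Then the duality relation q*_{α,n-1} + 1/q*_{α,n+1} = 2 holds. -/
theorem one_add_div_add_one_div_one_add_div_eq_two {K : Type*} [Field K] {a b c : K}
    (ha : a ≠ 0) (hb : b ≠ 0) (hab : a = b + c) :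
    (1 + c / a) + 1 / (1 + c / b) = 2 := by
  have hb' : 1 + c / b = a / b := by rw [one_add_div hb, hab]
  rw [hb', one_div_div]
  field_simp
  linear_combination -hab

theorem q_star_duality_general (α : ℝ) (q : ℝ) (n : ℤ)
    (h1 : α - ((n : ℝ) - 1) * (q - 1) ≠ 0)
    (h2 : α - ((n : ℝ) + 1) * (q - 1) ≠ 0) :
    (1 + 2 * (q - 1) / (α - ((n : ℝ) - 1) * (q - 1)))
      + 1 / (1 + 2 * (q - 1) / (α - ((n : ℝ) + 1) * (q - 1))) = 2 :=
  one_add_div_add_one_div_one_add_div_eq_two h1 h2 (by ring)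

/-- Duality relation for `q*_{α,n} = 1 + 2(q-1)/(α - n(q-1))`:
`q*_{α,n-1} + 1/q*_{α,n+1} = 2`, provided the denominators involved are nonzero. -/
theorem q_star_duality (α : ℝ) (hα0 : 0 < α) (hα2 : α ≤ 2) (q : ℝ) (n : ℤ)
    (h1 : α - ((n : ℝ) - 1) * (q - 1) ≠ 0)
    (h2 : α - ((n : ℝ) + 1) * (q - 1) ≠ 0)
    (h3 : 1 + 2 * (q - 1) / (α - ((n : ℝ) + 1) * (q - 1)) ≠ 0) :
    (1 + 2 * (q - 1) / (α - ((n : ℝ) - 1) * (q - 1)))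
      + 1 / (1 + 2 * (q - 1) / (α - ((n : ℝ) + 1) * (q - 1))) = 2 :=
  q_star_duality_general α q n h1 h2
end

section
/- Let q be a real number and let m be a natural number such that 1 + k(1-q) ≠ 0 for every integer k with 0 ≤ k ≤ m. Then the m-fold composition of the multiplicative duality followed by the additive duality satisfies the closed form (μ∘ν)^m(q) = (q + m(1-q))/(1 + m(1-q)) = (m - (m-1)q)/(m+1 - mq). -/
/-- The multiplicative duality `μ(q) = 1/q`. -/
noncomputable def muDual (q : ℝ) : ℝ := 1 / q

/-- The additive duality `ν(q) = 2 - q`. -/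
def nuDual (q : ℝ) : ℝ := 2 - q

/-! Writing `a = 1 - q`, the closed form is `xₙ = (q + n a)/(1 + n a)`. Since `q + (n + 1) a = 1 + n a`,
one has `2 - xₙ = (1 + (n + 1) a)/(1 + n a)`, whose reciprocal is `xₙ₊₁`; this step only needs
`1 + n a ≠ 0` because both sides are `0` when `1 + (n + 1) a = 0`. -/

lemma two_sub_div_of_ne_zero {q n : ℝ} (hn : 1 + n * (1 - q) ≠ 0) :
    2 - (q + n * (1 - q)) / (1 + n * (1 - q)) = (1 + (n + 1) * (1 - q)) / (1 + n * (1 - q)) := by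
  field_simp
  ring

lemma muDual_nuDual_closed_form_succ {q n : ℝ} (hn : 1 + n * (1 - q) ≠ 0) :
    muDual (nuDual ((q + n * (1 - q)) / (1 + n * (1 - q))))
      = (q + (n + 1) * (1 - q)) / (1 + (n + 1) * (1 - q)) := by
  rw [nuDual, two_sub_div_of_ne_zero hn, muDual, one_div_div]
  congr 1
  ring

lemma mu_nu_iterate_eq_div {q : ℝ} {m : ℕ} (h : ∀ k < m, 1 + (k : ℝ) * (1 - q) ≠ 0) :
    (muDual ∘ nuDual)^[m] q = (q + (m : ℝ) * (1 - q)) / (1 + (m : ℝ) * (1 - q)) := by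
  induction m with
  | zero => simp
  | succ n ih =>
    rw [Function.iterate_succ_apply', ih fun k hk => h k (hk.trans n.lt_succ_self),
      Function.comp_apply, muDual_nuDual_closed_form_succ (h n n.lt_succ_self)]
    push_cast
    rfl

/-- Closed form of the `m`-fold iterate of `μ∘ν`:
`(μ∘ν)^m(q) = (q + m(1-q))/(1 + m(1-q)) = (m - (m-1)q)/(m+1 - mq)`,
provided `1 + k(1-q) ≠ 0` for all `0 ≤ k ≤ m`. -/
theorem mu_nu_iterate_closed_form (q : ℝ) (m : ℕ)
    (h : ∀ k : ℕ, k ≤ m → 1 + (k : ℝ) * (1 - q) ≠ 0) :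
    (muDual ∘ nuDual)^[m] q = (q + (m : ℝ) * (1 - q)) / (1 + (m : ℝ) * (1 - q)) ∧
      (muDual ∘ nuDual)^[m] q
        = ((m : ℝ) - ((m : ℝ) - 1) * q) / ((m : ℝ) + 1 - (m : ℝ) * q) := by
  have hiter := mu_nu_iterate_eq_div fun k hk => h k hk.le
  refine ⟨hiter, hiter.trans ?_⟩
  congr 1 <;> ring
end

section
/- Let q be a nonzero real number and let m be a natural number such that q - k(1-q) ≠ 0 for every integer k with 0 ≤ k ≤ m. Then (μ∘ν)^m(μ(q)) = (1 - m(1-q))/(q - m(1-q)) = (-m+1+mq)/(-m+(m+1)q). -/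
/-! `μ∘ν` is the Möbius map `x ↦ 1/(2 - x)`, acting on a fraction `a/b` as `(a, b) ↦ (b, 2b - a)`.
This step carries consecutive terms of an arithmetic progression to the next pair, so iterating
it on `s₀/s₁` gives `sₘ/sₘ₊₁`; the theorem is the progression `sₖ = 1 - k(1 - q)`. -/

theorem muDual_comp_nuDual_div (a : ℝ) {b : ℝ} (hb : b ≠ 0) :
    (muDual ∘ nuDual) (a / b) = b / (2 * b - a) := by
  have hsub : 2 - a / b = (2 * b - a) / b := by field_simp
  rw [Function.comp_apply, muDual, nuDual, hsub, one_div_div]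

theorem iterate_muDual_comp_nuDual_div (a d : ℝ) (m : ℕ)
    (h : ∀ k < m, a + (k + 1) * d ≠ 0) :
    (muDual ∘ nuDual)^[m] (a / (a + d)) = (a + m * d) / (a + (m + 1) * d) := by
  induction m with
  | zero => simp
  | succ m ih =>
    rw [Function.iterate_succ_apply', ih fun k hk => h k (hk.trans m.lt_succ_self),
      muDual_comp_nuDual_div _ (h m m.lt_succ_self)]
    push_cast
    congr 1
    ring

theorem mu_nu_iterate_mu_closed_form_general (q : ℝ) (m : ℕ)
    (h : ∀ k : ℕ, k ≤ m → q - (k : ℝ) * (1 - q) ≠ 0) :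
    (muDual ∘ nuDual)^[m] (muDual q)
        = (1 - (m : ℝ) * (1 - q)) / (q - (m : ℝ) * (1 - q)) ∧
      (muDual ∘ nuDual)^[m] (muDual q)
        = (-(m : ℝ) + 1 + (m : ℝ) * q) / (-(m : ℝ) + ((m : ℝ) + 1) * q) := by
  have hprog : ∀ k < m, 1 + (k + 1) * (q - 1) ≠ 0 := fun k hk => by
    convert h k hk.le using 1
    ring
  have hclosed : (muDual ∘ nuDual)^[m] (muDual q)
      = (1 - (m : ℝ) * (1 - q)) / (q - (m : ℝ) * (1 - q)) := by
    have hstart : muDual q = 1 / (1 + (q - 1)) := by rw [muDual, add_sub_cancel]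
    rw [hstart, iterate_muDual_comp_nuDual_div 1 (q - 1) m hprog]
    congr 1 <;> ring
  refine ⟨hclosed, hclosed.trans ?_⟩
  congr 1 <;> ring

/-- Closed form of `(μ∘ν)^m(μ(q)) = (1 - m(1-q))/(q - m(1-q))
= (-m+1+mq)/(-m+(m+1)q)`, for `q ≠ 0` with `q - k(1-q) ≠ 0` for all `0 ≤ k ≤ m`. -/
theorem mu_nu_iterate_mu_closed_form (q : ℝ) (hq : q ≠ 0) (m : ℕ)
    (h : ∀ k : ℕ, k ≤ m → q - (k : ℝ) * (1 - q) ≠ 0) :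
    (muDual ∘ nuDual)^[m] (muDual q)
        = (1 - (m : ℝ) * (1 - q)) / (q - (m : ℝ) * (1 - q)) ∧
      (muDual ∘ nuDual)^[m] (muDual q)
        = (-(m : ℝ) + 1 + (m : ℝ) * q) / (-(m : ℝ) + ((m : ℝ) + 1) * q) :=
  mu_nu_iterate_mu_closed_form_general q m h
end

section
/- Let q ≥ 1, let f : ℝ → ℝ be a nonnegative measurable function, and let a > 0. Define the q-Fourier transform F_q[f](ξ) = ∫_ℝ f(x) · (1 + (1-q)·i·ξ·x·f(x)^{q-1})^{1/(1-q)} dx (a complex-valued integral, using the principal branch of the complex power; for q = 1 the integrand is f(x)·e^{iξx}). Then the rescaled density g(x) = a⁻¹ f(x/a) satisfies F_q[g](ξ) = F_q[f](a^{2-q} ξ) for every real ξ; equivalently, for a random variable X with density f, F_q[aX](ξ) = F_q[X](a^{2-q}ξ). -/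
open MeasureTheory

/-- The `q`-Fourier transform of a nonnegative density `f`:
`F_q[f](ξ) = ∫ f(x)·(1 + (1-q)·i·ξ·x·f(x)^{q-1})^{1/(1-q)} dx`, using the
principal branch of the complex power, with the convention that the integrand
vanishes where `f(x) = 0`; for `q = 1` the integrand is `f(x)·e^{iξx}`. -/
noncomputable def qFourier (q : ℝ) (f : ℝ → ℝ) (ξ : ℝ) : ℂ :=
  ∫ x : ℝ, if f x = 0 then 0 else
    if q = 1 then (f x : ℂ) * Complex.exp (Complex.I * (ξ : ℂ) * (x : ℂ))
    else (f x : ℂ) *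
      (1 + (1 - (q : ℂ)) * Complex.I * (ξ : ℂ) * (x : ℂ) * ((f x ^ (q - 1) : ℝ) : ℂ))
        ^ (((1 / (1 - q) : ℝ)) : ℂ)

/-! The integrand of `F_q` at `x` depends on `f` only through the value `t = f x`. Under the
substitution `x = a y` the rescaled density contributes `t = a⁻¹ f(y)` at the point `a y`, and
`ξ · a y · (a⁻¹ f(y))^{q-1} = a^{2-q} ξ · y · f(y)^{q-1}`, so the integrand becomes `a⁻¹` times
that of `F_q[f]` at `a^{2-q} ξ`; the Jacobian `a` cancels the factor `a⁻¹`. Linear substitution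
holds for Bochner integrals whether or not the integrand is integrable, so no integrability
is needed. -/

noncomputable def qFourierIntegrand (q ξ x t : ℝ) : ℂ :=
  if t = 0 then 0 else
    if q = 1 then (t : ℂ) * Complex.exp (Complex.I * (ξ : ℂ) * (x : ℂ))
    else (t : ℂ) *
      (1 + (1 - (q : ℂ)) * Complex.I * (ξ : ℂ) * (x : ℂ) * ((t ^ (q - 1) : ℝ) : ℂ))
        ^ (((1 / (1 - q) : ℝ)) : ℂ)

theorem qFourier_eq_integral (q : ℝ) (f : ℝ → ℝ) (ξ : ℝ) :
    qFourier q f ξ = ∫ x, qFourierIntegrand q ξ x (f x) :=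
  rfl

theorem mul_mul_inv_mul_rpow_sub_one {q a t : ℝ} (ha : 0 < a) (ht : 0 ≤ t) (ξ y : ℝ) :
    ξ * (a * y) * (a⁻¹ * t) ^ (q - 1) = a ^ (2 - q) * ξ * y * t ^ (q - 1) := by
  have ha_pow : a * a⁻¹ ^ (q - 1) = a ^ (2 - q) := by
    rw [Real.inv_rpow ha.le, ← Real.rpow_neg ha.le]
    nth_rewrite 1 [← Real.rpow_one a]
    rw [← Real.rpow_add ha]
    congr 1
    ring
  rw [Real.mul_rpow (inv_nonneg.mpr ha.le) ht, ← ha_pow]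
  ring

theorem qFourierIntegrand_mul_inv_mul {q a t : ℝ} (ha : 0 < a) (ht : 0 ≤ t) (ξ y : ℝ) :
    qFourierIntegrand q ξ (a * y) (a⁻¹ * t) =
      (a⁻¹ : ℂ) * qFourierIntegrand q (a ^ (2 - q) * ξ) y t := by
  rcases ht.eq_or_lt with rfl | ht_pos
  · simp [qFourierIntegrand]
  have hphase : (ξ : ℂ) * ((a * y : ℝ) : ℂ) * (((a⁻¹ * t) ^ (q - 1) : ℝ) : ℂ) =
      ((a ^ (2 - q) * ξ : ℝ) : ℂ) * y * ((t ^ (q - 1) : ℝ) : ℂ) := by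
    exact_mod_cast congrArg Complex.ofReal (mul_mul_inv_mul_rpow_sub_one (q := q) ha ht ξ y)
  unfold qFourierIntegrand
  rw [if_neg (by positivity), if_neg ht_pos.ne']
  split_ifs with hq
  · subst hq
    rw [show (2 : ℝ) - 1 = 1 by norm_num, Real.rpow_one]
    push_cast
    ring_nf
  · rw [mul_assoc _ (ξ : ℂ), mul_assoc _ ((ξ : ℂ) * _), hphase]
    push_cast
    ring_nf

theorem integral_eq_smul_integral_comp_mul_left {E : Type*} [NormedAddCommGroup E]
    [NormedSpace ℝ E] (g : ℝ → E) {a : ℝ} (ha : 0 < a) :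
    ∫ x, g x = a • ∫ y, g (a * y) := by
  rw [Measure.integral_comp_mul_left, abs_of_pos (inv_pos.mpr ha), smul_smul,
    mul_inv_cancel₀ ha.ne', one_smul]

theorem qFourier_scaling_general (q : ℝ) (f : ℝ → ℝ)
    (hf0 : ∀ x, 0 ≤ f x) (a : ℝ) (ha : 0 < a) (ξ : ℝ) :
    qFourier q (fun x => a⁻¹ * f (x / a)) ξ = qFourier q f (a ^ (2 - q) * ξ) := by
  simp only [qFourier_eq_integral]
  calc ∫ x, qFourierIntegrand q ξ x (a⁻¹ * f (x / a))
      = a • ∫ y, qFourierIntegrand q ξ (a * y) (a⁻¹ * f (a * y / a)) :=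
        integral_eq_smul_integral_comp_mul_left _ ha
    _ = a • ∫ y, (a⁻¹ : ℂ) * qFourierIntegrand q (a ^ (2 - q) * ξ) y (f y) := by
        simp_rw [mul_div_cancel_left₀ _ ha.ne', qFourierIntegrand_mul_inv_mul ha (hf0 _)]
    _ = ∫ y, qFourierIntegrand q (a ^ (2 - q) * ξ) y (f y) := by
        rw [integral_const_mul, Complex.real_smul, ← mul_assoc,
          mul_inv_cancel₀ (Complex.ofReal_ne_zero.mpr ha.ne'), one_mul]

/-- Scaling property of the `q`-Fourier transform, `q ≥ 1`: for a nonnegative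
measurable density `f` and `a > 0`, the rescaled density `g(x) = a⁻¹ f(x/a)`
(the density of `aX` when `X` has density `f`) satisfies
`F_q[g](ξ) = F_q[f](a^{2-q} ξ)` for every real `ξ`. -/
theorem qFourier_scaling (q : ℝ) (hq : 1 ≤ q) (f : ℝ → ℝ)
    (hf : Measurable f) (hf0 : ∀ x, 0 ≤ f x) (a : ℝ) (ha : 0 < a) (ξ : ℝ) :
    qFourier q (fun x => a⁻¹ * f (x / a)) ξ = qFourier q f (a ^ (2 - q) * ξ) :=
  qFourier_scaling_general q f hf0 a ha ξ
end
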